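/- Fix a consistent normal modal logic Λ and M ⊆ {◇,□}. Then: (1) for every set O of Boolean functions, Clos^Λ_M(O) is a Boolean clone; (2) Clos^Λ_M is a closure operation, i.e., O ⊆ Clos^Λ_M(O) = Clos^Λ_M(Clos^Λ_M(O)); and (3) for all M-simple sets of modal formulas Φ and Ψ, ML_Φ ≼^Λ ML_Ψ if and only if Clos^Λ_M(β(Φ)) ⊆ Clos^Λ_M(β(Ψ)). -/

import Mathlib

set_option maxHeartbeats 1000000

/-! ### Modal formulas -/

inductive MF : Type
  | var : ℕ → MF
  | neg : MF → MF
  | and : MF → MF → MF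
  | or : MF → MF → MF
  | dia : MF → MF
  | box : MF → MF

namespace MF

/-- Implication `φ → ψ`, as the abbreviation `¬φ ∨ ψ`. -/
def imp (φ ψ : MF) : MF := .or (.neg φ) ψ

/-- Bi-implication `φ ↔ ψ`. -/
def iff (φ ψ : MF) : MF := .and (φ.imp ψ) (ψ.imp φ)

/-- `⊥` abbreviates `p ∧ ¬p`. -/
def bot : MF := .and (.var 0) (.neg (.var 0))

/-- `⊤` abbreviates `p ∨ ¬p`. -/
def top : MF := .or (.var 0) (.neg (.var 0))

/-- A formula is purely propositional if it contains no modal operators. -/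
def isProp : MF → Prop
  | .var _ => True
  | .neg φ => φ.isProp
  | .and φ ψ => φ.isProp ∧ ψ.isProp
  | .or φ ψ => φ.isProp ∧ ψ.isProp
  | .dia _ => False
  | .box _ => False

/-- Boolean evaluation (meaningful for purely propositional formulas). -/
def propEval (v : ℕ → Bool) : MF → Bool
  | .var n => v n
  | .neg φ => !(propEval v φ)
  | .and φ ψ => propEval v φ && propEval v ψ
  | .or φ ψ => propEval v φ || propEval v ψ
  | .dia φ => propEval v φ
  | .box φ => propEval v φ

/-- Propositional tautologies. -/
def isTautology (φ : MF) : Prop := φ.isProp ∧ ∀ v, φ.propEval v = true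

/-- Uniform substitution. -/
def subst (σ : ℕ → MF) : MF → MF
  | .var n => σ n
  | .neg φ => .neg (φ.subst σ)
  | .and φ ψ => .and (φ.subst σ) (ψ.subst σ)
  | .or φ ψ => .or (φ.subst σ) (ψ.subst σ)
  | .dia φ => .dia (φ.subst σ)
  | .box φ => .box (φ.subst σ)

/-- The set of propositional variables occurring in a formula. -/
def vars : MF → Set ℕ
  | .var n => {n}
  | .neg φ => φ.vars
  | .and φ ψ => φ.vars ∪ ψ.vars
  | .or φ ψ => φ.vars ∪ ψ.vars
  | .dia φ => φ.vars
  | .box φ => φ.vars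

/-- Kripke satisfaction. -/
def sat {W : Type} (R : W → W → Prop) (V : ℕ → W → Prop) : MF → W → Prop
  | .var n, w => V n w
  | .neg φ, w => ¬ sat R V φ w
  | .and φ ψ, w => sat R V φ w ∧ sat R V ψ w
  | .or φ ψ, w => sat R V φ w ∨ sat R V ψ w
  | .dia φ, w => ∃ u, R w u ∧ sat R V φ u
  | .box φ, w => ∀ u, R w u → sat R V φ u

/-- `◇^n φ`. -/
def diaIter : ℕ → MF → MF
  | 0, φ => φ
  | n + 1, φ => .dia (diaIter n φ)

/-- `□^n φ`. -/
def boxIter : ℕ → MF → MF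
  | 0, φ => φ
  | n + 1, φ => .box (boxIter n φ)

/-- `◇^{≤n} φ`, the disjunction of `◇^k φ` for `0 ≤ k ≤ n`. -/
def diaLe : ℕ → MF → MF
  | 0, φ => φ
  | n + 1, φ => .or (diaLe n φ) (diaIter (n + 1) φ)

/-- An injective numeric encoding of modal formulas. -/
def encodeMF : MF → ℕ
  | .var n => Nat.pair 0 n
  | .neg φ => Nat.pair 1 φ.encodeMF
  | .and φ ψ => Nat.pair 2 (Nat.pair φ.encodeMF ψ.encodeMF)
  | .or φ ψ => Nat.pair 3 (Nat.pair φ.encodeMF ψ.encodeMF)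
  | .dia φ => Nat.pair 4 φ.encodeMF
  | .box φ => Nat.pair 5 φ.encodeMF

end MF

/-- A normal modal logic. -/
structure NormalLogic (Λ : Set MF) : Prop where
  taut : ∀ φ, φ.isTautology → φ ∈ Λ
  axK : ∀ φ ψ, ((MF.box (φ.imp ψ)).imp ((MF.box φ).imp (MF.box ψ))) ∈ Λ
  dual : ∀ φ, ((MF.dia φ).iff (MF.neg (MF.box (MF.neg φ)))) ∈ Λ
  mp : ∀ φ ψ, φ.imp ψ ∈ Λ → φ ∈ Λ → ψ ∈ Λ
  usubst : ∀ φ (σ : ℕ → MF), φ ∈ Λ → φ.subst σ ∈ Λ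
  nec : ∀ φ, φ ∈ Λ → MF.box φ ∈ Λ

/-- Validity on the frame `F_⊙` consisting of a single reflexive world. -/
def validOnReflPoint (φ : MF) : Prop :=
  ∀ V : ℕ → Prop, MF.sat (W := Unit) (fun _ _ => True) (fun n _ => V n) φ ()

/-- Validity on the frame `F_•` consisting of a single irreflexive world. -/
def validOnIrreflPoint (φ : MF) : Prop :=
  ∀ V : ℕ → Prop, MF.sat (W := Unit) (fun _ _ => False) (fun n _ => V n) φ ()

/-- Type A: `F_⊙ ⊨ Λ`. -/
def TypeA (Λ : Set MF) : Prop := ∀ φ ∈ Λ, validOnReflPoint φ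

/-- Type B: `F_• ⊨ Λ` and `Λ ⊢ □^n ⊥` for some `n ≥ 1`. -/
def TypeB (Λ : Set MF) : Prop :=
  (∀ φ ∈ Λ, validOnIrreflPoint φ) ∧ ∃ n ≥ 1, MF.boxIter n MF.bot ∈ Λ

/-- Type C: `F_• ⊨ Λ`, `Λ ⊬ □^n ⊥` for all `n ≥ 1`, `Λ ⊢ ◇^{≤n} □⊥` for some `n ≥ 1`. -/
def TypeC (Λ : Set MF) : Prop :=
  (∀ φ ∈ Λ, validOnIrreflPoint φ) ∧ (∀ n ≥ 1, MF.boxIter n MF.bot ∉ Λ) ∧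
    ∃ n ≥ 1, MF.diaLe n (MF.box MF.bot) ∈ Λ

/-- The (expansions of the) fragment `ML_Φ`: the smallest set of modal formulas containing
all propositional variables and closed under applying the connectives given by the formulas in
`Φ` (i.e., substituting fragment formulas into a member of `Φ`). -/
inductive MLFrag (Φ : Set MF) : MF → Prop
  | var (n : ℕ) : MLFrag Φ (MF.var n)
  | app (φ : MF) (hφ : φ ∈ Φ) (σ : ℕ → MF) (hσ : ∀ n, MLFrag Φ (σ n)) :
      MLFrag Φ (φ.subst σ)

/-- Expressive containment `ML_Φ ≼^Λ ML_Ψ`. -/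
def exprLe (Λ : Set MF) (Φ Ψ : Set MF) : Prop :=
  ∀ φ, MLFrag Φ φ → ∃ ψ, MLFrag Ψ ψ ∧ (φ.iff ψ) ∈ Λ

/-- Expressive equivalence with respect to `Λ`. -/
def exprEq (Λ : Set MF) (Φ Ψ : Set MF) : Prop := exprLe Λ Φ Ψ ∧ exprLe Λ Ψ Φ

/-- The minimal normal modal logic `K`: (semantically) the set of formulas valid in all
Kripke models. -/
def KLogic : Set MF :=
  {φ | ∀ (W : Type) (R : W → W → Prop) (V : ℕ → W → Prop) (w : W), MF.sat R V φ w}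

/-! ### Boolean functions and clones -/

/-- A Boolean function of positive arity. -/
structure BFun : Type where
  arity : ℕ
  arity_pos : 0 < arity
  eval : (Fin arity → Bool) → Bool

/-- A Boolean clone: a set of Boolean functions containing all projections and
closed under composition. -/
def IsClone (C : Set BFun) : Prop :=
  (∀ (n : ℕ) (hn : 0 < n) (k : Fin n), (⟨n, hn, fun v => v k⟩ : BFun) ∈ C) ∧
  (∀ f ∈ C, ∀ (m : ℕ) (hm : 0 < m) (g : Fin (BFun.arity f) → (Fin m → Bool) → Bool),
    (∀ i, (⟨m, hm, g i⟩ : BFun) ∈ C) →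
    (⟨m, hm, fun v => f.eval (fun i => g i v)⟩ : BFun) ∈ C)

/-- The clone generated by a set of Boolean functions. -/
def cloneGen (O : Set BFun) : Set BFun := ⋂₀ {C : Set BFun | IsClone C ∧ O ⊆ C}

/-- `O ≼ O'`: the clone generated by `O` is contained in the clone generated by `O'`. -/
def cloneLe (O O' : Set BFun) : Prop := cloneGen O ⊆ cloneGen O'

/-- The constant-true unary Boolean function. -/
def bfTop : BFun := ⟨1, Nat.one_pos, fun _ => true⟩
/-- The constant-false unary Boolean function. -/
def bfBot : BFun := ⟨1, Nat.one_pos, fun _ => false⟩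
/-- Negation. -/
def bfNot : BFun := ⟨1, Nat.one_pos, fun v => !(v 0)⟩
/-- Binary conjunction. -/
def bfAnd : BFun := ⟨2, Nat.succ_pos 1, fun v => v 0 && v 1⟩
/-- Binary disjunction. -/
def bfOr : BFun := ⟨2, Nat.succ_pos 1, fun v => v 0 || v 1⟩
/-- Ternary exclusive or `x ⊕ y ⊕ z`. -/
def bf3Xor : BFun := ⟨3, Nat.succ_pos 2, fun v => (v 0).xor ((v 1).xor (v 2))⟩
/-- `oxor(x,y,z) = x ∨ (y ⊕ z)`. -/
def bfOxor : BFun := ⟨3, Nat.succ_pos 2, fun v => v 0 || ((v 1).xor (v 2))⟩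
/-- `aimp(x,y,z) = x ∧ (y → z)`. -/
def bfAimp : BFun := ⟨3, Nat.succ_pos 2, fun v => v 0 && (!(v 1) || v 2)⟩

/-- The (purely propositional) formula `φ` defines the Boolean function `f`. -/
def definesBF (φ : MF) (f : BFun) : Prop :=
  φ.isProp ∧ ∀ v : ℕ → Bool, φ.propEval v = f.eval (fun i => v i.val)

/-- The generating set of formulas of the simple fragment `ML_{M ∪ O}`, where
`M ⊆ {◇,□}` is specified by the two Booleans `hd` (for `◇`) and `hb` (for `□`). -/
def MOgen (hd hb : Bool) (O : Set BFun) : Set MF :=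
  {φ | (hd = true ∧ φ = MF.dia (MF.var 0)) ∨ (hb = true ∧ φ = MF.box (MF.var 0)) ∨
    ∃ f ∈ O, definesBF φ f}

/-- `Clos^Λ_M(O)`: the set of Boolean functions `f` such that some propositional formula
defining `f` is `Λ`-equivalent to some `ML_{M ∪ O}`-formula. -/
def Clos (Λ : Set MF) (hd hb : Bool) (O : Set BFun) : Set BFun :=
  {f | ∃ φ ψ : MF, definesBF φ f ∧ MLFrag (MOgen hd hb O) ψ ∧ (φ.iff ψ) ∈ Λ}

/-- `β(Φ)`: the set of Boolean functions defined by propositional formulas in `Φ`. -/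
def betaBF (Φ : Set MF) : Set BFun := {f | ∃ φ ∈ Φ, definesBF φ f}

/-- A set of modal formulas is simple if each member is `◇x`, `□x`, or purely
propositional. -/
def IsSimpleSet (Φ : Set MF) : Prop :=
  ∀ φ ∈ Φ, (∃ n, φ = MF.dia (MF.var n)) ∨ (∃ n, φ = MF.box (MF.var n)) ∨ φ.isProp

/-- `Φ` is `M`-simple (with `M` given by `hd`, `hb`): simple, and the modal operators
among its members are exactly those in `M`. -/
def IsMSimpleSet (hd hb : Bool) (Φ : Set MF) : Prop :=
  IsSimpleSet Φ ∧ ((∃ n, MF.dia (MF.var n) ∈ Φ) ↔ hd = true) ∧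
    ((∃ n, MF.box (MF.var n) ∈ Φ) ↔ hb = true)

/-! ### Propositional fragments `PL_O` -/

/-- Formulas of the propositional fragment `PL_O`. -/
inductive PLF (O : Set BFun) : Type
  | var : ℕ → PLF O
  | app : (f : BFun) → f ∈ O → (Fin f.arity → PLF O) → PLF O

namespace PLF

variable {O : Set BFun}

/-- Evaluation of a `PL_O`-formula under a truth assignment. -/
def eval (v : ℕ → Bool) : PLF O → Bool
  | .var n => v n
  | .app f _ args => f.eval (fun i => (args i).eval v)

/-- The variables occurring in a `PL_O`-formula. -/
def pvars : PLF O → Set ℕ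
  | .var n => {n}
  | .app _ _ args => ⋃ i, (args i).pvars

/-- The set of subformulas of a `PL_O`-formula. -/
def subf : PLF O → Set (PLF O)
  | .var n => {PLF.var n}
  | .app f h args => insert (PLF.app f h args) (⋃ i, (args i).subf)

/-- `|φ|_dag`: the number of distinct subformulas. -/
noncomputable def dagSize (φ : PLF O) : ℕ := φ.subf.ncard

/-- Equivalence of propositional formulas. -/
def equivPLF (φ ψ : PLF O) : Prop := ∀ v, φ.eval v = ψ.eval v

/-- `φ` fits the labeled example `(V, lab)`. -/
def fits (φ : PLF O) (e : (ℕ → Bool) × Bool) : Prop := φ.eval e.1 = e.2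

end PLF

/-- `E` uniquely characterizes `φ` with respect to the class `L` of formulas. -/
def uniqCharPL {O : Set BFun} (φ : PLF O) (L : Set (PLF O))
    (E : Set ((ℕ → Bool) × Bool)) : Prop :=
  (∀ e ∈ E, φ.fits e) ∧ ∀ ψ ∈ L, (∀ e ∈ E, ψ.fits e) → φ.equivPLF ψ

/-! ### Concept classes and PC-reductions -/

/-- A concept `c` fits the labeled example `(e, lab)`. -/
def ccFits {C : Type*} {E : Type*} (l : C → Set E) (c : C) (e : E × Bool) : Prop :=
  e.1 ∈ l c ↔ e.2 = true

/-- `S` uniquely characterizes the concept `c` within the concept class given by `l`. -/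
def ccUniqChar {C : Type*} {E : Type*} (l : C → Set E) (c : C) (S : Set (E × Bool)) : Prop :=
  (∀ e ∈ S, ccFits l c e) ∧ ∀ c', (∀ e ∈ S, ccFits l c' e) → l c' = l c

/-- A PC-reduction between concept classes. -/
structure PCRed {C1 : Type*} {E1 : Type*} {C2 : Type*} {E2 : Type*}
    (l1 : C1 → Set E1) (l2 : C2 → Set E2) where
  fc : C1 → C2
  he : E1 → E2
  cond1 : ∀ c e, e ∈ l1 c ↔ he e ∈ l2 (fc c)
  cond2 : ∀ e : E2, (∀ c, e ∈ l2 (fc c)) ∨ (∀ c, e ∉ l2 (fc c)) ∨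
    ∃ e' : E1, {c | e ∈ l2 (fc c)} = {c | e' ∈ l1 c}

/-- Extend an assignment on `PROP` to all variables (by `false` elsewhere). -/
def extAssign (PROP : Finset ℕ) (v : {x // x ∈ PROP} → Bool) : ℕ → Bool :=
  fun n => if h : n ∈ PROP then v ⟨n, h⟩ else false

/-- The concept class `PL_O[PROP]`: concepts are `PL_O`-formulas with variables in `PROP`,
examples are truth assignments on `PROP`. -/
def plSem (O : Set BFun) (PROP : Finset ℕ) :
    {φ : PLF O // φ.pvars ⊆ ↑PROP} → Set ({x // x ∈ PROP} → Bool) :=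
  fun φ => {v | φ.1.eval (extAssign PROP v) = true}

/-! ### Simple modal fragments as syntax, and finite pointed Kripke models -/

/-- Formulas of the simple modal fragment `ML_{M ∪ O}` (as a syntax): Boolean connectives
from `O`, plus `◇` if `hd` and `□` if `hb`. -/
inductive MLF (O : Set BFun) (hd hb : Bool) : Type
  | var : ℕ → MLF O hd hb
  | app : (f : BFun) → f ∈ O → (Fin f.arity → MLF O hd hb) → MLF O hd hb
  | dia : hd = true → MLF O hd hb → MLF O hd hb
  | box : hb = true → MLF O hd hb → MLF O hd hb

/-- Propositional application of a Boolean function to propositions. -/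
def BFun.evalP (f : BFun) (P : Fin f.arity → Prop) : Prop :=
  f.eval (fun i => @decide (P i) (Classical.propDecidable _)) = true

namespace MLF

variable {O : Set BFun} {hd hb : Bool}

/-- Kripke satisfaction for simple-fragment formulas. -/
def msat {W : Type} (R : W → W → Prop) (V : ℕ → W → Prop) :
    MLF O hd hb → W → Prop
  | .var n, w => V n w
  | .app f _ args, w => f.evalP (fun i => msat R V (args i) w)
  | .dia _ φ, w => ∃ u, R w u ∧ msat R V φ u
  | .box _ φ, w => ∀ u, R w u → msat R V φ u

/-- Variables of a simple-fragment formula. -/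
def mvars : MLF O hd hb → Set ℕ
  | .var n => {n}
  | .app _ _ args => ⋃ i, (args i).mvars
  | .dia _ φ => φ.mvars
  | .box _ φ => φ.mvars

end MLF

/-- A finite pointed Kripke model. -/
structure FPModel : Type 1 where
  W : Type
  fin : Finite W
  R : W → W → Prop
  V : ℕ → W → Prop
  pt : W

/-- The concept class `ML_{O,∘}[{p}]` (with `p` the variable `0`): concepts are
simple-fragment formulas over the single variable `p`, examples are finite pointed
Kripke models. -/
def mlSem (O : Set BFun) (hd hb : Bool) :
    {φ : MLF O hd hb // φ.mvars ⊆ {0}} → Set FPModel :=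
  fun φ => {M | MLF.msat M.R M.V φ.1 M.pt}

/-- Satisfaction of a modal formula in a finite pointed Kripke model. -/
def msatMF (M : FPModel) (φ : MF) : Prop := MF.sat M.R M.V φ M.pt

/-- A modal formula fits a labeled example (a finite pointed model with a label). -/
def fitsMF (φ : MF) (e : FPModel × Bool) : Prop := msatMF e.1 φ ↔ e.2 = true

/-- `K`-equivalence of modal formulas: truth at the same worlds of all Kripke models. -/
def KequivMF (φ ψ : MF) : Prop :=
  ∀ (W : Type) (R : W → W → Prop) (V : ℕ → W → Prop) (w : W),
    MF.sat R V φ w ↔ MF.sat R V ψ w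

/-- `E` uniquely characterizes `φ` relative to the fragment `L` (with respect to `K`). -/
def uniqCharMF (φ : MF) (L : Set MF) (E : Set (FPModel × Bool)) : Prop :=
  (∀ e ∈ E, fitsMF φ e) ∧ ∀ ψ ∈ L, (∀ e ∈ E, fitsMF ψ e) → KequivMF φ ψ

/-- `ML_Φ[P]`: the fragment generated by `Φ`, restricted to variables in `P`. -/
def fragSimple (Φ : Set MF) (P : Set ℕ) : Set MF :=
  {φ | MLFrag Φ φ ∧ φ.vars ⊆ P}

/-- `ML_{M∪O}[P]`. -/
def fragMO (hd hb : Bool) (O : Set BFun) (P : Set ℕ) : Set MF :=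
  fragSimple (MOgen hd hb O) P

/-- For a simple set `Φ`: the modal operators of `Φ` are among those specified by
`hd`, `hb`, and `β(Φ)` is contained in the clone generated by `O`. -/
def simpleLeOps (Φ : Set MF) (O : Set BFun) (hd hb : Bool) : Prop :=
  ((∃ n, MF.dia (MF.var n) ∈ Φ) → hd = true) ∧
  ((∃ n, MF.box (MF.var n) ∈ Φ) → hb = true) ∧
  cloneGen (betaBF Φ) ⊆ cloneGen O

/-- Decoding of a natural number as a labeled example (a finite pointed Kripke model with
a Boolean label). -/
def decodeEx (c : ℕ) : FPModel × Bool :=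
  match Denumerable.ofNat (ℕ × List (ℕ × ℕ) × List (ℕ × ℕ) × ℕ × ℕ) c with
  | (n, edges, val, pt, b) =>
    (⟨Fin (n + 1), inferInstance,
      fun u v => (u.val, v.val) ∈ edges,
      fun k w => (k, w.val) ∈ val,
      ⟨pt % (n + 1), Nat.mod_lt pt (Nat.succ_pos n)⟩⟩, b % 2 == 1)


/-!
Λ-equivalence is a congruence for every connective (for `□` by K and necessitation, for `◇`
through duality) and is preserved by uniform substitution. Hence `ML_Φ ≼^Λ ML_Ψ` holds as soon
as every generator in `Φ` is Λ-equivalent to an `ML_Ψ`-formula. This reduces everything to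
generators: an `M`-simple `Φ` is Λ-equivalent to `ML_{M ∪ β(Φ)}`, and
`ML_{M ∪ O} ≼^Λ ML_{M ∪ O'}` holds iff `O ⊆ Clos^Λ_M(O')`, which makes `Clos^Λ_M` a closure
operator. It is a clone because composing functions amounts to substituting their defining
formulas; that every Boolean function has a defining formula is Shannon expansion.
-/

namespace MF

theorem subst_var (φ : MF) : φ.subst MF.var = φ := by
  induction φ <;> simp_all [subst]

theorem subst_subst (φ : MF) (σ τ : ℕ → MF) :
    (φ.subst σ).subst τ = φ.subst (fun n => (σ n).subst τ) := by
  induction φ <;> simp_all [subst]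

theorem propEval_subst (φ : MF) (σ : ℕ → MF) (v : ℕ → Bool) :
    (φ.subst σ).propEval v = φ.propEval (fun n => (σ n).propEval v) := by
  induction φ <;> simp_all [subst, propEval]

theorem isProp_subst {φ : MF} {σ : ℕ → MF} (h : φ.isProp) (hσ : ∀ n, (σ n).isProp) :
    (φ.subst σ).isProp := by
  induction φ <;> simp_all [subst, isProp]

def maxVar : MF → ℕ
  | .var n => n
  | .neg φ => φ.maxVar
  | .and φ ψ => max φ.maxVar ψ.maxVar
  | .or φ ψ => max φ.maxVar ψ.maxVar
  | .dia φ => φ.maxVar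
  | .box φ => φ.maxVar

theorem propEval_congr {φ : MF} {v v' : ℕ → Bool} (h : ∀ n ≤ φ.maxVar, v n = v' n) :
    φ.propEval v = φ.propEval v' := by
  induction φ with
  | var n => exact h n le_rfl
  | neg φ ih | dia φ ih | box φ ih => simp only [propEval, ih h]
  | and φ ψ ih₁ ih₂ | or φ ψ ih₁ ih₂ =>
      simp only [propEval, ih₁ fun n hn => h n (le_max_of_le_left hn),
        ih₂ fun n hn => h n (le_max_of_le_right hn)]

theorem exists_definesBF {φ : MF} (h : φ.isProp) : ∃ f, definesBF φ f :=
  ⟨⟨φ.maxVar + 1, Nat.succ_pos _,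
    fun w => φ.propEval fun n => if hn : n < φ.maxVar + 1 then w ⟨n, hn⟩ else false⟩,
    h, fun _ => propEval_congr fun _ hn => by rw [dif_pos (Nat.lt_succ_of_le hn)]⟩

theorem isTautology_iff_of_definesBF {φ χ : MF} {f : BFun} (hφ : definesBF φ f)
    (hχ : definesBF χ f) : (φ.iff χ).isTautology := by
  refine ⟨⟨⟨hφ.1, hχ.1⟩, hχ.1, hφ.1⟩, fun v => ?_⟩
  have hv : φ.propEval v = χ.propEval v := by rw [hφ.2, hχ.2]
  simp only [MF.iff, MF.imp, propEval, hv]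
  cases χ.propEval v <;> rfl

def shannon : (n : ℕ) → ((Fin n → Bool) → Bool) → MF
  | 0, g => if g Fin.elim0 then top else bot
  | n + 1, g =>
      .or (.and (.var n) (shannon n fun w => g (Fin.snoc w true)))
        (.and (.neg (.var n)) (shannon n fun w => g (Fin.snoc w false)))

theorem isProp_shannon (n : ℕ) (g : (Fin n → Bool) → Bool) : (shannon n g).isProp := by
  induction n with
  | zero => unfold shannon; split <;> simp [top, bot, isProp]
  | succ n ih => exact ⟨⟨trivial, ih _⟩, trivial, ih _⟩

theorem propEval_shannon (n : ℕ) (g : (Fin n → Bool) → Bool) (v : ℕ → Bool) :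
    (shannon n g).propEval v = g fun i => v i := by
  induction n with
  | zero =>
      rw [Subsingleton.elim (fun i : Fin 0 => v i) Fin.elim0]
      unfold shannon; split <;> simp_all [top, bot, propEval]
  | succ n ih =>
      have hsnoc : (fun i : Fin (n + 1) => v i) = Fin.snoc (fun i : Fin n => v i) (v n) := by
        funext i
        refine Fin.lastCases ?_ (fun j => ?_) i <;> simp
      simp only [shannon, propEval, ih, hsnoc]
      cases v n <;> simp

def finSubst {k : ℕ} (s : Fin k → MF) : ℕ → MF :=
  fun n => if h : n < k then s ⟨n, h⟩ else .var n

theorem forall_finSubst {k : ℕ} {s : Fin k → MF} {P : MF → Prop} (hs : ∀ i, P (s i))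
    (hvar : ∀ n, P (.var n)) (n : ℕ) : P (finSubst s n) := by
  unfold finSubst
  split
  · exact hs _
  · exact hvar n

end MF

theorem BFun.exists_definesBF (f : BFun) : ∃ φ, definesBF φ f :=
  ⟨MF.shannon f.arity f.eval, MF.isProp_shannon _ _, MF.propEval_shannon _ _⟩

theorem definesBF_subst_finSubst {φ : MF} {f : BFun} (hφ : definesBF φ f) {m : ℕ} (hm : 0 < m)
    {g : Fin f.arity → (Fin m → Bool) → Bool} {s : Fin f.arity → MF}
    (hs : ∀ i, definesBF (s i) ⟨m, hm, g i⟩) :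
    definesBF (φ.subst (MF.finSubst s)) ⟨m, hm, fun v => f.eval fun i => g i v⟩ := by
  refine ⟨MF.isProp_subst hφ.1 (MF.forall_finSubst (fun i => (hs i).1) fun _ => trivial),
    fun v => ?_⟩
  rw [MF.propEval_subst, hφ.2]
  congr 1
  funext i
  simp [MF.finSubst, (hs i).2]

namespace NormalLogic

variable {Λ : Set MF}

theorem subst_mem_of_isTautology (hΛ : NormalLogic Λ) {t : MF} (ht : t.isTautology)
    (σ : ℕ → MF) : t.subst σ ∈ Λ :=
  hΛ.usubst t σ (hΛ.taut t ht)

theorem iff_refl (hΛ : NormalLogic Λ) (φ : MF) : φ.iff φ ∈ Λ := by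
  have ht : ((MF.var 0).iff (MF.var 0)).isTautology := by
    refine ⟨by simp [MF.iff, MF.imp, MF.isProp], fun v => ?_⟩
    simp only [MF.iff, MF.imp, MF.propEval]
    cases v 0 <;> rfl
  exact hΛ.subst_mem_of_isTautology ht fun _ => φ

theorem and_intro (hΛ : NormalLogic Λ) {A B : MF} (hA : A ∈ Λ) (hB : B ∈ Λ) :
    A.and B ∈ Λ := by
  have ht : ((MF.var 0).imp ((MF.var 1).imp ((MF.var 0).and (MF.var 1)))).isTautology := by
    refine ⟨by simp [MF.imp, MF.isProp], fun v => ?_⟩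
    simp only [MF.imp, MF.propEval]
    cases v 0 <;> cases v 1 <;> rfl
  have := hΛ.subst_mem_of_isTautology ht fun n => if n = 0 then A else B
  exact hΛ.mp _ _ (hΛ.mp _ _ this hA) hB

theorem left_of_and (hΛ : NormalLogic Λ) {A B : MF} (h : A.and B ∈ Λ) : A ∈ Λ := by
  have ht : (((MF.var 0).and (MF.var 1)).imp (MF.var 0)).isTautology := by
    refine ⟨by simp [MF.imp, MF.isProp], fun v => ?_⟩
    simp only [MF.imp, MF.propEval]
    cases v 0 <;> cases v 1 <;> rfl
  exact hΛ.mp _ _ (hΛ.subst_mem_of_isTautology ht fun n => if n = 0 then A else B) h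

theorem right_of_and (hΛ : NormalLogic Λ) {A B : MF} (h : A.and B ∈ Λ) : B ∈ Λ := by
  have ht : (((MF.var 0).and (MF.var 1)).imp (MF.var 1)).isTautology := by
    refine ⟨by simp [MF.imp, MF.isProp], fun v => ?_⟩
    simp only [MF.imp, MF.propEval]
    cases v 0 <;> cases v 1 <;> rfl
  exact hΛ.mp _ _ (hΛ.subst_mem_of_isTautology ht fun n => if n = 0 then A else B) h

theorem iff_symm (hΛ : NormalLogic Λ) {A B : MF} (h : A.iff B ∈ Λ) : B.iff A ∈ Λ :=
  hΛ.and_intro (hΛ.right_of_and h) (hΛ.left_of_and h)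

theorem iff_trans (hΛ : NormalLogic Λ) {A B C : MF} (h₁ : A.iff B ∈ Λ) (h₂ : B.iff C ∈ Λ) :
    A.iff C ∈ Λ := by
  have ht : (((MF.var 0).iff (MF.var 1)).imp
      (((MF.var 1).iff (MF.var 2)).imp ((MF.var 0).iff (MF.var 2)))).isTautology := by
    refine ⟨by simp [MF.iff, MF.imp, MF.isProp], fun v => ?_⟩
    simp only [MF.iff, MF.imp, MF.propEval]
    cases v 0 <;> cases v 1 <;> cases v 2 <;> rfl
  have := hΛ.subst_mem_of_isTautology ht fun n => if n = 0 then A else if n = 1 then B else C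
  exact hΛ.mp _ _ (hΛ.mp _ _ this h₁) h₂

theorem neg_congr (hΛ : NormalLogic Λ) {A B : MF} (h : A.iff B ∈ Λ) :
    (MF.neg A).iff (MF.neg B) ∈ Λ := by
  have ht : (((MF.var 0).iff (MF.var 1)).imp
      ((MF.neg (MF.var 0)).iff (MF.neg (MF.var 1)))).isTautology := by
    refine ⟨by simp [MF.iff, MF.imp, MF.isProp], fun v => ?_⟩
    simp only [MF.iff, MF.imp, MF.propEval]
    cases v 0 <;> cases v 1 <;> rfl
  exact hΛ.mp _ _ (hΛ.subst_mem_of_isTautology ht fun n => if n = 0 then A else B) h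

theorem and_congr (hΛ : NormalLogic Λ) {A B A' B' : MF} (h₁ : A.iff A' ∈ Λ)
    (h₂ : B.iff B' ∈ Λ) : (A.and B).iff (A'.and B') ∈ Λ := by
  have ht : (((MF.var 0).iff (MF.var 2)).imp (((MF.var 1).iff (MF.var 3)).imp
      (((MF.var 0).and (MF.var 1)).iff ((MF.var 2).and (MF.var 3))))).isTautology := by
    refine ⟨by simp [MF.iff, MF.imp, MF.isProp], fun v => ?_⟩
    simp only [MF.iff, MF.imp, MF.propEval]
    cases v 0 <;> cases v 1 <;> cases v 2 <;> cases v 3 <;> rfl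
  have := hΛ.subst_mem_of_isTautology ht
    fun n => if n = 0 then A else if n = 1 then B else if n = 2 then A' else B'
  exact hΛ.mp _ _ (hΛ.mp _ _ this h₁) h₂

theorem or_congr (hΛ : NormalLogic Λ) {A B A' B' : MF} (h₁ : A.iff A' ∈ Λ)
    (h₂ : B.iff B' ∈ Λ) : (A.or B).iff (A'.or B') ∈ Λ := by
  have ht : (((MF.var 0).iff (MF.var 2)).imp (((MF.var 1).iff (MF.var 3)).imp
      (((MF.var 0).or (MF.var 1)).iff ((MF.var 2).or (MF.var 3))))).isTautology := by
    refine ⟨by simp [MF.iff, MF.imp, MF.isProp], fun v => ?_⟩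
    simp only [MF.iff, MF.imp, MF.propEval]
    cases v 0 <;> cases v 1 <;> cases v 2 <;> cases v 3 <;> rfl
  have := hΛ.subst_mem_of_isTautology ht
    fun n => if n = 0 then A else if n = 1 then B else if n = 2 then A' else B'
  exact hΛ.mp _ _ (hΛ.mp _ _ this h₁) h₂

theorem box_congr (hΛ : NormalLogic Λ) {A B : MF} (h : A.iff B ∈ Λ) :
    (MF.box A).iff (MF.box B) ∈ Λ :=
  hΛ.and_intro (hΛ.mp _ _ (hΛ.axK A B) (hΛ.nec _ (hΛ.left_of_and h)))
    (hΛ.mp _ _ (hΛ.axK B A) (hΛ.nec _ (hΛ.right_of_and h)))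

theorem dia_congr (hΛ : NormalLogic Λ) {A B : MF} (h : A.iff B ∈ Λ) :
    (MF.dia A).iff (MF.dia B) ∈ Λ :=
  hΛ.iff_trans (hΛ.dual A) <| hΛ.iff_trans (hΛ.neg_congr (hΛ.box_congr (hΛ.neg_congr h)))
    (hΛ.iff_symm (hΛ.dual B))

theorem subst_congr (hΛ : NormalLogic Λ) {σ τ : ℕ → MF} (h : ∀ n, (σ n).iff (τ n) ∈ Λ)
    (φ : MF) : (φ.subst σ).iff (φ.subst τ) ∈ Λ := by
  induction φ with
  | var n => exact h n
  | neg φ ih => exact hΛ.neg_congr ih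
  | and φ ψ ih₁ ih₂ => exact hΛ.and_congr ih₁ ih₂
  | or φ ψ ih₁ ih₂ => exact hΛ.or_congr ih₁ ih₂
  | dia φ ih => exact hΛ.dia_congr ih
  | box φ ih => exact hΛ.box_congr ih

theorem iff_mem_of_definesBF (hΛ : NormalLogic Λ) {φ χ : MF} {f : BFun}
    (hφ : definesBF φ f) (hχ : definesBF χ f) : φ.iff χ ∈ Λ :=
  hΛ.taut _ (MF.isTautology_iff_of_definesBF hφ hχ)

end NormalLogic

namespace MLFrag

variable {Φ : Set MF}

theorem of_mem {φ : MF} (hφ : φ ∈ Φ) : MLFrag Φ φ := by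
  simpa only [MF.subst_var] using MLFrag.app φ hφ MF.var MLFrag.var

theorem subst {φ : MF} (hφ : MLFrag Φ φ) {τ : ℕ → MF} (hτ : ∀ n, MLFrag Φ (τ n)) :
    MLFrag Φ (φ.subst τ) := by
  induction hφ with
  | var n => exact hτ n
  | app ψ hψ σ _ ih => simpa only [MF.subst_subst] using MLFrag.app ψ hψ _ ih

end MLFrag

section Expressivity

variable {Λ : Set MF} {Φ Ψ Χ : Set MF}

theorem exprLe_trans (hΛ : NormalLogic Λ) (h₁ : exprLe Λ Φ Ψ) (h₂ : exprLe Λ Ψ Χ) :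
    exprLe Λ Φ Χ := by
  intro φ hφ
  obtain ⟨ψ, hψ, hφψ⟩ := h₁ φ hφ
  obtain ⟨χ, hχ, hψχ⟩ := h₂ ψ hψ
  exact ⟨χ, hχ, hΛ.iff_trans hφψ hψχ⟩

theorem exprLe_of_forall_mem (hΛ : NormalLogic Λ)
    (h : ∀ φ ∈ Φ, ∃ ψ, MLFrag Ψ ψ ∧ φ.iff ψ ∈ Λ) : exprLe Λ Φ Ψ := by
  intro ξ hξ
  induction hξ with
  | var n => exact ⟨.var n, .var n, hΛ.iff_refl _⟩
  | app φ hφ σ _ ih =>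
      choose τ hτ hστ using ih
      obtain ⟨ψ, hψ, hφψ⟩ := h φ hφ
      exact ⟨ψ.subst τ, hψ.subst hτ,
        hΛ.iff_trans (hΛ.subst_congr hστ φ) (hΛ.usubst _ τ hφψ)⟩

theorem exprLe_congr {Φ' Ψ' : Set MF} (hΛ : NormalLogic Λ) (hΦ : exprEq Λ Φ Φ')
    (hΨ : exprEq Λ Ψ Ψ') : exprLe Λ Φ Ψ ↔ exprLe Λ Φ' Ψ' :=
  ⟨fun h => exprLe_trans hΛ hΦ.2 (exprLe_trans hΛ h hΨ.1),
    fun h => exprLe_trans hΛ hΦ.1 (exprLe_trans hΛ h hΨ.2)⟩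

end Expressivity

section Closure

variable {Λ : Set MF} {hd hb : Bool} {O O' : Set BFun}

theorem subset_Clos (hΛ : NormalLogic Λ) : O ⊆ Clos Λ hd hb O := by
  intro f hf
  obtain ⟨φ, hφ⟩ := f.exists_definesBF
  exact ⟨φ, φ, hφ, .of_mem (Or.inr (Or.inr ⟨f, hf, hφ⟩)), hΛ.iff_refl φ⟩

theorem Clos_subset_of_exprLe (hΛ : NormalLogic Λ)
    (h : exprLe Λ (MOgen hd hb O) (MOgen hd hb O')) : Clos Λ hd hb O ⊆ Clos Λ hd hb O' := by
  rintro f ⟨φ, ψ, hφ, hψ, hφψ⟩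
  obtain ⟨ψ', hψ', hψψ'⟩ := h ψ hψ
  exact ⟨φ, ψ', hφ, hψ', hΛ.iff_trans hφψ hψψ'⟩

theorem exprLe_MOgen_of_subset_Clos (hΛ : NormalLogic Λ) (h : O ⊆ Clos Λ hd hb O') :
    exprLe Λ (MOgen hd hb O) (MOgen hd hb O') := by
  refine exprLe_of_forall_mem hΛ ?_
  rintro φ (hφ | hφ | ⟨f, hf, hφ⟩)
  · exact ⟨φ, .of_mem (Or.inl hφ), hΛ.iff_refl φ⟩
  · exact ⟨φ, .of_mem (Or.inr (Or.inl hφ)), hΛ.iff_refl φ⟩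
  · obtain ⟨χ, ρ, hχ, hρ, hχρ⟩ := h hf
    exact ⟨ρ, hρ, hΛ.iff_trans (hΛ.iff_mem_of_definesBF hφ hχ) hχρ⟩

theorem Clos_subset_Clos_iff (hΛ : NormalLogic Λ) :
    Clos Λ hd hb O ⊆ Clos Λ hd hb O' ↔ O ⊆ Clos Λ hd hb O' :=
  ⟨(subset_Clos hΛ).trans, fun h => Clos_subset_of_exprLe hΛ (exprLe_MOgen_of_subset_Clos hΛ h)⟩

theorem exprLe_MOgen_iff (hΛ : NormalLogic Λ) :
    exprLe Λ (MOgen hd hb O) (MOgen hd hb O') ↔ Clos Λ hd hb O ⊆ Clos Λ hd hb O' :=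
  ⟨Clos_subset_of_exprLe hΛ, fun h => exprLe_MOgen_of_subset_Clos hΛ ((subset_Clos hΛ).trans h)⟩

theorem Clos_Clos (hΛ : NormalLogic Λ) : Clos Λ hd hb (Clos Λ hd hb O) = Clos Λ hd hb O :=
  subset_antisymm ((Clos_subset_Clos_iff hΛ).2 subset_rfl)
    ((Clos_subset_Clos_iff hΛ).2 ((subset_Clos hΛ).trans (subset_Clos hΛ)))

theorem isClone_Clos (hΛ : NormalLogic Λ) : IsClone (Clos Λ hd hb O) := by
  refine ⟨fun _ _ k => ⟨.var k, .var k, ⟨trivial, fun _ => rfl⟩, .var k, hΛ.iff_refl _⟩, ?_⟩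
  rintro f ⟨φ, ψ, hφ, hψ, hφψ⟩ m hm g hg
  choose φs ψs hφs hψs hφψs using hg
  have hcongr : ∀ n, (MF.finSubst φs n).iff (MF.finSubst ψs n) ∈ Λ := by
    intro n
    unfold MF.finSubst
    split
    · exact hφψs _
    · exact hΛ.iff_refl _
  exact ⟨φ.subst (MF.finSubst φs), ψ.subst (MF.finSubst ψs), definesBF_subst_finSubst hφ hm hφs,
    hψ.subst (MF.forall_finSubst hψs .var),
    hΛ.iff_trans (hΛ.subst_congr hcongr φ) (hΛ.usubst _ _ hφψ)⟩

end Closure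

theorem IsMSimpleSet.exprEq_MOgen_betaBF {Λ Φ : Set MF} (hΛ : NormalLogic Λ) {hd hb : Bool}
    (hΦ : IsMSimpleSet hd hb Φ) : exprEq Λ Φ (MOgen hd hb (betaBF Φ)) := by
  refine ⟨exprLe_of_forall_mem hΛ fun φ hφ => ?_, exprLe_of_forall_mem hΛ ?_⟩
  · refine ⟨φ, ?_, hΛ.iff_refl φ⟩
    rcases hΦ.1 φ hφ with ⟨n, rfl⟩ | ⟨n, rfl⟩ | hprop
    · exact .app (.dia (.var 0)) (Or.inl ⟨hΦ.2.1.1 ⟨n, hφ⟩, rfl⟩) (fun _ => .var n) fun _ => .var n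
    · exact .app (.box (.var 0)) (Or.inr (Or.inl ⟨hΦ.2.2.1 ⟨n, hφ⟩, rfl⟩)) (fun _ => .var n)
        fun _ => .var n
    · obtain ⟨f, hf⟩ := MF.exists_definesBF hprop
      exact .of_mem (Or.inr (Or.inr ⟨f, ⟨φ, hφ, hf⟩, hf⟩))
  · rintro φ (⟨hdia, rfl⟩ | ⟨hbox, rfl⟩ | ⟨f, ⟨ψ, hψ, hψf⟩, hφ⟩)
    · obtain ⟨n, hn⟩ := hΦ.2.1.2 hdia
      exact ⟨_, MLFrag.app _ hn (fun _ => .var 0) fun _ => .var 0, hΛ.iff_refl _⟩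
    · obtain ⟨n, hn⟩ := hΦ.2.2.2 hbox
      exact ⟨_, MLFrag.app _ hn (fun _ => .var 0) fun _ => .var 0, hΛ.iff_refl _⟩
    · exact ⟨ψ, .of_mem hψ, hΛ.iff_mem_of_definesBF hφ hψf⟩

theorem stmt5_general (Λ : Set MF) (hΛ : NormalLogic Λ)
    (hd hb : Bool) :
    (∀ O : Set BFun, IsClone (Clos Λ hd hb O)) ∧
    (∀ O : Set BFun, O ⊆ Clos Λ hd hb O ∧
      Clos Λ hd hb (Clos Λ hd hb O) = Clos Λ hd hb O) ∧
    (∀ Φ Ψ : Set MF, IsMSimpleSet hd hb Φ → IsMSimpleSet hd hb Ψ →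
      (exprLe Λ Φ Ψ ↔ Clos Λ hd hb (betaBF Φ) ⊆ Clos Λ hd hb (betaBF Ψ))) :=
  ⟨fun _ => isClone_Clos hΛ, fun _ => ⟨subset_Clos hΛ, Clos_Clos hΛ⟩, fun _ _ hΦ hΨ =>
    (exprLe_congr hΛ (hΦ.exprEq_MOgen_betaBF hΛ) (hΨ.exprEq_MOgen_betaBF hΛ)).trans
      (exprLe_MOgen_iff hΛ)⟩

theorem stmt5 (Λ : Set MF) (hΛ : NormalLogic Λ) (hcons : Λ ≠ Set.univ)
    (hd hb : Bool) :
    (∀ O : Set BFun, IsClone (Clos Λ hd hb O)) ∧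
    (∀ O : Set BFun, O ⊆ Clos Λ hd hb O ∧
      Clos Λ hd hb (Clos Λ hd hb O) = Clos Λ hd hb O) ∧
    (∀ Φ Ψ : Set MF, IsMSimpleSet hd hb Φ → IsMSimpleSet hd hb Ψ →
      (exprLe Λ Φ Ψ ↔ Clos Λ hd hb (betaBF Φ) ⊆ Clos Λ hd hb (betaBF Ψ))) :=
  stmt5_general Λ hΛ hd hb
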